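/- The sequence w_k = ∏_{i=1}^k α_i^{1/α_i} (k ≥ 1) is increasing and bounded above by a real number w with w < 2.98; in particular w_k < 2.98 for all k ≥ 1. -/

import Mathlib

/-- Auxiliary: `alphaAux i` is `α_{i+1}`, with `α_1 = 2` and
`α_{i+1} = α_i² - α_i + 1`. -/
def alphaAux : ℕ → ℕ
  | 0 => 2
  | i + 1 => alphaAux i ^ 2 - alphaAux i + 1

/-- The sequence `α_1 = 2, α_2 = 3, α_3 = 7, α_4 = 43, ...`, indexed from `1`. -/
def alphaSeq (i : ℕ) : ℕ := alphaAux (i - 1)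

/-- `w_k = ∏_{i=1}^k α_i^(1/α_i)`, with real `α_i`-th roots. -/
noncomputable def wseq (k : ℕ) : ℝ :=
  ∏ i ∈ Finset.Icc 1 k, (alphaSeq i : ℝ) ^ ((alphaSeq i : ℝ)⁻¹)
/-!
Each factor is `α^(1/α) = exp (log α / α) > 1`, so `w_k` increases. Since `4 α_i ≤ α_{i+1} ≤ α_i²`
once `α_i ≥ 5`, the exponents `log α_i / α_i` at least halve from `i = 5` on, whence
`w_k ≤ w_4 · exp (2 log α_5 / α_5)` with `α_5 = 1807` and `log 1807 < 8`. The head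
`w_4 = 2^(1/2) 3^(1/3) 7^(1/7) 43^(1/43)` is bounded factor by factor, using `α^(1/α) ≤ r ↔ α ≤ r^α`.
-/

open Real Finset

theorem Real.log_div_le_half_log_div {a b : ℝ} (ha : 1 ≤ a) (hab : 4 * a ≤ b) (hba : b ≤ a ^ 2) :
    log b / b ≤ log a / a / 2 := by
  have hlog : log b ≤ 2 * log a :=
    calc log b ≤ log (a ^ 2) := log_le_log (by linarith) hba
      _ = 2 * log a := by simp [log_pow]
  have hloga : 0 ≤ log a := log_nonneg ha
  calc log b / b ≤ 2 * log a / (4 * a) := by gcongr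
    _ = log a / a / 2 := by field_simp; ring

theorem Real.rpow_inv_natCast_self_le {n : ℕ} {r : ℝ} (hr : 0 ≤ r) (hn : 0 < n) (h : n ≤ r ^ n) :
    (n : ℝ) ^ (n : ℝ)⁻¹ ≤ r := by
  rw [rpow_inv_le_iff_of_pos n.cast_nonneg hr (by positivity), rpow_natCast]
  exact h

theorem Finset.sum_range_le_two_mul_of_le_half {s : ℕ → ℝ} (hs : ∀ n, 0 ≤ s n)
    (h : ∀ n, s (n + 1) ≤ s n / 2) (n : ℕ) : ∑ i ∈ range n, s i ≤ 2 * s 0 := by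
  suffices ∑ i ∈ range n, s i + 2 * s n ≤ 2 * s 0 by linarith [hs n]
  induction n with
  | zero => simp
  | succ n ih => rw [sum_range_succ]; linarith [h n]

theorem le_alphaAux (n : ℕ) : n + 2 ≤ alphaAux n := by
  induction n with
  | zero => rfl
  | succ n ih =>
    have : 2 * alphaAux n ≤ alphaAux n ^ 2 := by nlinarith
    simp only [alphaAux]
    omega

theorem two_le_alphaSeq (i : ℕ) : 2 ≤ alphaSeq i := (le_alphaAux _).trans' (by omega)

theorem alphaSeq_succ {i : ℕ} (hi : 1 ≤ i) :
    (alphaSeq (i + 1) : ℝ) = (alphaSeq i : ℝ) ^ 2 - alphaSeq i + 1 := by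
  obtain ⟨j, rfl⟩ := Nat.exists_eq_add_of_le' hi
  have : alphaAux j ≤ alphaAux j ^ 2 := Nat.le_self_pow two_ne_zero _
  simp [alphaSeq, alphaAux, Nat.cast_sub this]

noncomputable def logTerm (i : ℕ) : ℝ := log (alphaSeq i) / alphaSeq i

theorem logTerm_pos (i : ℕ) : 0 < logTerm i := by
  have : (2 : ℝ) ≤ alphaSeq i := by exact_mod_cast two_le_alphaSeq i
  exact div_pos (log_pos (by linarith)) (by linarith)

theorem logTerm_succ_le {i : ℕ} (hi : 5 ≤ i) : logTerm (i + 1) ≤ logTerm i / 2 := by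
  have h5 : (5 : ℝ) ≤ alphaSeq i := by exact_mod_cast (le_alphaAux (i - 1)).trans' (by omega)
  rw [logTerm, alphaSeq_succ (by omega)]
  exact log_div_le_half_log_div (by linarith) (by nlinarith) (by linarith)

theorem logTerm_five_lt : logTerm 5 < 8 / 1807 := by
  have h5 : alphaSeq 5 = 1807 := by decide
  have hlog : log 1807 < 8 := by
    rw [log_lt_iff_lt_exp (by norm_num), show (8 : ℝ) = (8 : ℕ) by norm_num, ← exp_one_pow]
    exact lt_of_lt_of_le (by norm_num) (pow_le_pow_left₀ (by norm_num) exp_one_gt_d9.le 8)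
  rw [logTerm, h5]
  push_cast
  exact div_lt_div_of_pos_right hlog (by norm_num)

theorem wseq_succ (k : ℕ) : wseq (k + 1) = wseq k * exp (logTerm (k + 1)) := by
  have : (0 : ℝ) < alphaSeq (k + 1) := by exact_mod_cast (two_le_alphaSeq _).trans_lt' two_pos
  rw [wseq, prod_Icc_succ_top (by omega), ← wseq, rpow_def_of_pos this, logTerm, div_eq_mul_inv]

theorem wseq_add (m n : ℕ) : wseq (m + n) = wseq m * exp (∑ j ∈ range n, logTerm (m + 1 + j)) := by
  induction n with
  | zero => simp
  | succ n ih => rw [← add_assoc, wseq_succ, ih, sum_range_succ, exp_add, mul_assoc]; ring_nf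

theorem wseq_pos (k : ℕ) : 0 < wseq k := by
  induction k with
  | zero => simp [wseq]
  | succ k ih => rw [wseq_succ]; positivity

theorem wseq_strictMono : StrictMono wseq :=
  strictMono_nat_of_lt_succ fun k => by
    rw [wseq_succ]
    exact lt_mul_right (wseq_pos k) (one_lt_exp_iff.mpr (logTerm_pos _))

theorem wseq_four_le : wseq 4 ≤ 1.4143 * 1.4423 * 1.3205 * 1.0915 := by
  have h : wseq 4 = ((2 : ℕ) : ℝ) ^ ((2 : ℕ) : ℝ)⁻¹ * ((3 : ℕ) : ℝ) ^ ((3 : ℕ) : ℝ)⁻¹ *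
      ((7 : ℕ) : ℝ) ^ ((7 : ℕ) : ℝ)⁻¹ * ((43 : ℕ) : ℝ) ^ ((43 : ℕ) : ℝ)⁻¹ := by
    simp [wseq, prod_Icc_succ_top, alphaSeq, alphaAux]
  rw [h]
  gcongr <;> exact rpow_inv_natCast_self_le (by norm_num) (by norm_num) (by norm_num)

theorem sum_logTerm_le (n : ℕ) : ∑ j ∈ range n, logTerm (5 + j) ≤ 2 * logTerm 5 :=
  sum_range_le_two_mul_of_le_half (s := fun j => logTerm (5 + j)) (fun _ => (logTerm_pos _).le)
    (fun j => by simpa only [← add_assoc] using logTerm_succ_le (i := 5 + j) (by omega)) n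

theorem wseq_lt (k : ℕ) : wseq k < 2.97 := by
  have htail : ∑ j ∈ range k, logTerm (4 + 1 + j) ≤ 16 / 1807 := by
    linarith [sum_logTerm_le k, logTerm_five_lt]
  calc wseq k ≤ wseq (4 + k) := wseq_strictMono.monotone (by omega)
    _ = wseq 4 * exp (∑ j ∈ range k, logTerm (4 + 1 + j)) := wseq_add 4 k
    _ ≤ 1.4143 * 1.4423 * 1.3205 * 1.0915 * (1 / (1 - 16 / 1807)) := by
      gcongr
      · exact wseq_four_le
      · exact (exp_le_exp.mpr htail).trans
          (exp_bound_div_one_sub_of_interval (by norm_num) (by norm_num))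
    _ < 2.97 := by norm_num

/-- The sequence `w_k = ∏_{i=1}^k α_i^(1/α_i)` is increasing and bounded above by
a real number `w < 2.98`; in particular `w_k < 2.98` for all `k ≥ 1`. -/
theorem wseq_increasing_bounded :
    (∀ k : ℕ, 1 ≤ k → wseq k < wseq (k + 1)) ∧
    (∃ w : ℝ, w < 2.98 ∧ ∀ k : ℕ, 1 ≤ k → wseq k < w) ∧
    (∀ k : ℕ, 1 ≤ k → wseq k < 2.98) :=
  ⟨fun k _ => wseq_strictMono k.lt_succ_self, ⟨2.97, by norm_num, fun k _ => wseq_lt k⟩,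
    fun k _ => (wseq_lt k).trans (by norm_num)⟩
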